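/- arXiv:2103.15234 — 2 statements merged into one kernel-verified Lean document; each statement's English description precedes it below -/
import Mathlib

section
/- Any dual solution π that is feasible for the box-restricted dual over the projected column set Ω_{Rπ⁺} (i.e., satisfies c_l + Σ_f a_{fl} π_f − Σ_u a_{ul} π_u ≥ 0 for all l ∈ Ω_{Rπ⁺} and π⁻_u ≤ π_u ≤ π⁺_u for all u) is also feasible for the box-restricted dual over the original set Ω_R; hence the optimal value over Ω_{Rπ⁺} is at most the optimal value over Ω_R. -/
/-- feasibility for the box dual over the projected column set `Ω_{Rπ⁺}`
implies feasibility over `Ω_R`; hence the optimal value over `Ω_{Rπ⁺}` is at most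
the optimal value over `Ω_R`. -/
theorem stmt1 {N F L : Type*} [Fintype N] [Fintype F] [DecidableEq L]
    (a : L → N → ℝ) (b : L → F → ℝ) (c : L → ℝ)
    (ha : ∀ l u, a l u = 0 ∨ a l u = 1)
    (πp πm : N → ℝ)
    (ΩR : Finset L) (proj : L → L)
    (Fam : L → Set L)
    (hFamSelf : ∀ lh, lh ∈ Fam lh)
    (hFamSub : ∀ lh l, l ∈ Fam lh →
      (∀ u, a l u ≤ a lh u) ∧ (∀ f, b l f = b lh f))
    (hprojMem : ∀ lh, proj lh ∈ Fam lh)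
    (hprojMin : ∀ lh, ∀ l ∈ Fam lh,
      c (proj lh) - ∑ u, a (proj lh) u * πp u ≤ c l - ∑ u, a l u * πp u) :
    (∀ (π : N → ℝ) (ρ : F → ℝ),
      ((∀ u, 0 ≤ π u) ∧ (∀ f, 0 ≤ ρ f) ∧
        (∀ l ∈ ΩR.image proj, 0 ≤ c l + ∑ f, b l f * ρ f - ∑ u, a l u * π u) ∧
        (∀ u, πm u ≤ π u ∧ π u ≤ πp u)) →
      ((∀ u, 0 ≤ π u) ∧ (∀ f, 0 ≤ ρ f) ∧
        (∀ l ∈ ΩR, 0 ≤ c l + ∑ f, b l f * ρ f - ∑ u, a l u * π u) ∧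
        (∀ u, πm u ≤ π u ∧ π u ≤ πp u))) ∧
    (∀ v1 v2 : ℝ,
      IsGreatest {x | ∃ (π : N → ℝ) (ρ : F → ℝ),
        (∀ u, 0 ≤ π u) ∧ (∀ f, 0 ≤ ρ f) ∧
        (∀ l ∈ ΩR.image proj, 0 ≤ c l + ∑ f, b l f * ρ f - ∑ u, a l u * π u) ∧
        (∀ u, πm u ≤ π u ∧ π u ≤ πp u) ∧ x = ∑ u, π u - ∑ f, ρ f} v1 →
      IsGreatest {x | ∃ (π : N → ℝ) (ρ : F → ℝ),
        (∀ u, 0 ≤ π u) ∧ (∀ f, 0 ≤ ρ f) ∧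
        (∀ l ∈ ΩR, 0 ≤ c l + ∑ f, b l f * ρ f - ∑ u, a l u * π u) ∧
        (∀ u, πm u ≤ π u ∧ π u ≤ πp u) ∧ x = ∑ u, π u - ∑ f, ρ f} v2 →
      v1 ≤ v2) := by
  have key : ∀ (π : N → ℝ) (ρ : F → ℝ),
      (∀ u, πm u ≤ π u ∧ π u ≤ πp u) →
      (∀ l ∈ ΩR.image proj, 0 ≤ c l + ∑ f, b l f * ρ f - ∑ u, a l u * π u) →
      (∀ l ∈ ΩR, 0 ≤ c l + ∑ f, b l f * ρ f - ∑ u, a l u * π u) := by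
    intro π ρ hbox h l hl
    have hmem : proj l ∈ ΩR.image proj := Finset.mem_image_of_mem proj hl
    have h0 := h (proj l) hmem
    have h1 : c (proj l) - ∑ u, a (proj l) u * πp u ≤ c l - ∑ u, a l u * πp u :=
      hprojMin l l (hFamSelf l)
    have h2 : ∑ u, a (proj l) u * (πp u - π u) ≤ ∑ u, a l u * (πp u - π u) :=
      Finset.sum_le_sum fun u _ =>
        mul_le_mul_of_nonneg_right ((hFamSub l (proj l) (hprojMem l)).1 u)
          (by linarith [(hbox u).2])
    have e1 : ∀ l' : L, ∑ u, a l' u * (πp u - π u)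
        = (∑ u, a l' u * πp u) - ∑ u, a l' u * π u := by
      intro l'
      rw [← Finset.sum_sub_distrib]
      exact Finset.sum_congr rfl fun u _ => by ring
    have hb : (∑ f, b (proj l) f * ρ f) = ∑ f, b l f * ρ f :=
      Finset.sum_congr rfl fun f _ => by
        rw [(hFamSub l (proj l) (hprojMem l)).2 f]
    rw [e1 (proj l), e1 l] at h2
    linarith
  constructor
  · rintro π ρ ⟨h1, h2, h3, h4⟩
    exact ⟨h1, h2, key π ρ h4 h3, h4⟩
  · rintro v1 v2 ⟨⟨π, ρ, hπ, hρ, hfeas, hbox, hx⟩, _⟩ ⟨_, hub⟩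
    exact hub ⟨π, ρ, hπ, hρ, key π ρ hbox hfeas, hbox, hx⟩
end

section
/- Greedy optimality for nested cardinality constraints: minimize Σ_u w_u x_u over x ∈ {0,1}^N subject to Σ_{u : d_u ≥ d} x_u ≤ b_d for all thresholds d ∈ {0,1,…,D}, where b is derived from a reference column so that b_d is non-increasing in d. The greedy algorithm that sorts items by weight w_u ascending, skips items with w_u ≥ 0, and includes an item iff its inclusion keeps all constraints Σ_{selected, d_u' ≥ d} 1 ≤ b_d satisfied, produces an optimal solution. -/
/-!
Feasible sets of a nested cardinality system are closed under subsets and have an exchange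
property: if `A ⊆ B`, `A ∪ {u}` and `B` are feasible but `B ∪ {u}` is not, then `u` can be
swapped for some `z ∈ B \ A`. Indeed, take the largest threshold `t ≤ d u` at which `B` is tight;
`A ∪ {u}` has room at `t`, so some `z ∈ B \ A` has `d z ≥ t`, and removing `z` frees every
threshold up to `d z`, while the thresholds in `(d z, d u]` are not tight.

Greedy optimality follows by induction along the sorted list: when greedy accepts `u`, a feasible
set extending the current greedy set by later items is turned, via the exchange property, into
one that also contains `u` and weighs no more, because `u` is negative and no heavier than any
later item.
-/

open Classical in
/-- Greedy selection along a list: include an item iff the result stays feasible. -/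
noncomputable def greedySelect {α : Type*} [DecidableEq α] (feas : Finset α → Prop) :
    List α → Finset α → Finset α
  | [], S => S
  | u :: rest, S =>
      if feas (insert u S) then greedySelect feas rest (insert u S)
      else greedySelect feas rest S

open Finset

section Greedy

variable {α : Type*} [DecidableEq α] {feas : Finset α → Prop} {u : α} {L : List α}
  {S : Finset α}

theorem greedySelect_cons_of_feas (h : feas (insert u S)) :
    greedySelect feas (u :: L) S = greedySelect feas L (insert u S) := by
  rw [greedySelect, if_pos h]

theorem greedySelect_cons_of_not_feas (h : ¬feas (insert u S)) :
    greedySelect feas (u :: L) S = greedySelect feas L S := by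
  rw [greedySelect, if_neg h]

theorem feas_greedySelect (L : List α) (hS : feas S) : feas (greedySelect feas L S) := by
  induction L generalizing S with
  | nil => exact hS
  | cons u L ih =>
    by_cases h : feas (insert u S)
    · rw [greedySelect_cons_of_feas h]
      exact ih h
    · rw [greedySelect_cons_of_not_feas h]
      exact ih hS

def HasInsertExchange (feas : Finset α → Prop) : Prop :=
  ∀ ⦃A B : Finset α⦄ ⦃u : α⦄, A ⊆ B → u ∉ B → feas (insert u A) → feas B →
    ¬feas (insert u B) → ∃ z ∈ B, z ∉ A ∧ feas (insert u (B.erase z))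

variable {w : α → ℝ}

theorem exists_feas_insert_subset_sum_le (hexch : HasInsertExchange feas) {A B : Finset α}
    (hAB : A ⊆ B) (hB : feas B) (hu : feas (insert u A)) (hwu : w u < 0)
    (hBL : ∀ x ∈ B, x ∉ A → x ∈ u :: L) (hle : ∀ z ∈ L, w u ≤ w z) :
    ∃ B', feas B' ∧ insert u A ⊆ B' ∧ B' ⊆ insert u B ∧ ∑ x ∈ B', w x ≤ ∑ x ∈ B, w x := by
  by_cases huB : u ∈ B
  · exact ⟨B, hB, insert_subset huB hAB, subset_insert u B, le_rfl⟩
  by_cases hfB : feas (insert u B)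
  · refine ⟨insert u B, hfB, insert_subset_insert u hAB, subset_rfl, ?_⟩
    rw [sum_insert huB]
    linarith
  obtain ⟨z, hzB, hzA, hfz⟩ := hexch hAB huB hu hB hfB
  have hzL : z ∈ L :=
    (List.mem_cons.mp (hBL z hzB hzA)).resolve_left fun hzu => huB (hzu ▸ hzB)
  refine ⟨insert u (B.erase z), hfz, insert_subset_insert u (subset_erase.mpr ⟨hAB, hzA⟩),
    insert_subset_insert u (erase_subset z B), ?_⟩
  rw [sum_insert fun h => huB (mem_of_mem_erase h), ← sum_erase_add B w hzB]
  linarith [hle z hzL]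

theorem sum_greedySelect_le (hdown : Antitone feas) (hexch : HasInsertExchange feas)
    (hsort : L.Pairwise (fun u v => w u ≤ w v)) (hneg : ∀ x ∈ L, w x < 0)
    {A B : Finset α} (hB : feas B) (hAB : A ⊆ B) (hBL : ∀ x ∈ B, x ∉ A → x ∈ L) :
    ∑ x ∈ greedySelect feas L A, w x ≤ ∑ x ∈ B, w x := by
  induction L generalizing A B with
  | nil =>
    obtain rfl : B = A := Subset.antisymm (fun x hx => by_contra fun hxA => by
      simpa using hBL x hx hxA) hAB
    rw [greedySelect]
  | cons u L ih =>
    obtain ⟨hle, hsort⟩ := List.pairwise_cons.mp hsort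
    have hnegL : ∀ x ∈ L, w x < 0 := fun x hx => hneg x (List.mem_cons_of_mem u hx)
    have hBL' : ∀ x ∈ B, x ∉ A → x ≠ u → x ∈ L := fun x hx hxA hxu =>
      (List.mem_cons.mp (hBL x hx hxA)).resolve_left hxu
    by_cases hu : feas (insert u A)
    · rw [greedySelect_cons_of_feas hu]
      obtain ⟨B', hB', hAB', hB'B, hsum⟩ :=
        exists_feas_insert_subset_sum_le hexch hAB hB hu (hneg u List.mem_cons_self) hBL hle
      refine (ih hsort hnegL hB' hAB' fun x hx hxA => ?_).trans hsum
      rw [mem_insert, not_or] at hxA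
      exact hBL' x ((mem_insert.mp (hB'B hx)).resolve_left hxA.1) hxA.2 hxA.1
    · rw [greedySelect_cons_of_not_feas hu]
      refine ih hsort hnegL hB hAB fun x hx hxA => hBL' x hx hxA ?_
      rintro rfl
      exact hu (hdown (insert_subset hx hAB) hB)

end Greedy

section Nested

variable {N : Type*} {D : ℕ} {d : N → ℕ} {b : ℕ → ℕ}

def NestedFeasible (D : ℕ) (d : N → ℕ) (b : ℕ → ℕ) (S : Finset N) : Prop :=
  ∀ t ≤ D, #{u ∈ S | t ≤ d u} ≤ b t

theorem nestedFeasible_antitone : Antitone (NestedFeasible D d b) :=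
  fun _ _ hST hT t ht => (card_le_card (filter_subset_filter _ hST)).trans (hT t ht)

variable [DecidableEq N]

theorem card_filter_insert_le (p : N → Prop) [DecidablePred p] (u : N) (S : Finset N) :
    #{x ∈ insert u S | p x} ≤ #{x ∈ S | p x} + 1 := by
  rw [filter_insert]
  split_ifs
  exacts [card_insert_le _ _, Nat.le_succ _]

theorem card_filter_insert_of_neg (p : N → Prop) [DecidablePred p] {u : N} (hu : ¬p u)
    (S : Finset N) : #{x ∈ insert u S | p x} = #{x ∈ S | p x} := by
  rw [filter_insert, if_neg hu]

theorem card_filter_insert_of_pos (p : N → Prop) [DecidablePred p] {u : N} {S : Finset N}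
    (hp : p u) (hu : u ∉ S) : #{x ∈ insert u S | p x} = #{x ∈ S | p x} + 1 := by
  rw [filter_insert, if_pos hp, card_insert_of_notMem fun h => hu (mem_filter.mp h).1]

theorem card_filter_erase_add_one (p : N → Prop) [DecidablePred p] {z : N} {S : Finset N}
    (hp : p z) (hz : z ∈ S) : #{x ∈ S.erase z | p x} + 1 = #{x ∈ S | p x} := by
  rw [filter_erase, card_erase_add_one (mem_filter.mpr ⟨hz, hp⟩)]

theorem exists_tight_of_not_nestedFeasible_insert {B : Finset N} {u : N}
    (hB : NestedFeasible D d b B) (hnB : ¬NestedFeasible D d b (insert u B)) :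
    ∃ t ≤ D, t ≤ d u ∧ b t ≤ #{x ∈ B | t ≤ d x} := by
  simp only [NestedFeasible, not_forall, not_le] at hnB
  obtain ⟨t, ht, hviol⟩ := hnB
  have htu : t ≤ d u := by
    by_contra htu
    rw [card_filter_insert_of_neg (t ≤ d ·) htu] at hviol
    exact (hB t ht).not_gt hviol
  have := card_filter_insert_le (t ≤ d ·) u B
  exact ⟨t, ht, htu, by omega⟩

theorem hasInsertExchange_nestedFeasible : HasInsertExchange (NestedFeasible D d b) := by
  intro A B u hAB huB hA hB hnB
  let tight (s : ℕ) : Prop := s ≤ d u ∧ b s ≤ #{x ∈ B | s ≤ d x}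
  obtain ⟨t, htD, htight⟩ := exists_tight_of_not_nestedFeasible_insert hB hnB
  set ts := Nat.findGreatest tight D
  have htsD : ts ≤ D := Nat.findGreatest_le D
  obtain ⟨htsu, htsB⟩ : tight ts := Nat.findGreatest_spec htD htight
  have hroom : #{x ∈ A | ts ≤ d x} < #{x ∈ B | ts ≤ d x} := by
    have := hA ts htsD
    rw [card_filter_insert_of_pos (ts ≤ d ·) htsu fun h => huB (hAB h)] at this
    omega
  obtain ⟨z, hzB, hzA⟩ := exists_mem_notMem_of_card_lt_card hroom
  obtain ⟨hzB, hzts⟩ := mem_filter.mp hzB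
  refine ⟨z, hzB, fun h => hzA (mem_filter.mpr ⟨h, hzts⟩), fun s hs => ?_⟩
  have hins := card_filter_insert_le (s ≤ d ·) u (B.erase z)
  have herase : #{x ∈ B.erase z | s ≤ d x} ≤ #{x ∈ B | s ≤ d x} :=
    card_le_card (filter_subset_filter _ (erase_subset z B))
  have hBs := hB s hs
  by_cases hsz : s ≤ d z
  · have := card_filter_erase_add_one (s ≤ d ·) hsz hzB
    omega
  by_cases hsu : s ≤ d u
  · have hslack : ¬tight s := Nat.findGreatest_is_greatest (by omega) hs
    simp only [tight, hsu, true_and, not_le] at hslack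
    omega
  · rw [card_filter_insert_of_neg (s ≤ d ·) hsu]
    omega

end Nested

theorem stmt15_general {N : Type*} [DecidableEq N]
    (D : ℕ) (d : N → ℕ) (w : N → ℝ)
    (b : ℕ → ℕ)
    (feas : Finset N → Prop)
    (hfeasdef : ∀ S : Finset N,
      feas S ↔ ∀ dd ≤ D, (S.filter (fun u => dd ≤ d u)).card ≤ b dd)
    (L : List N)
    (hmem : ∀ u, u ∈ L ↔ w u < 0)
    (hsort : L.Pairwise (fun u v => w u ≤ w v)) :
    feas (greedySelect feas L ∅) ∧
    ∀ S : Finset N, feas S →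
      ∑ u ∈ greedySelect feas L ∅, w u ≤ ∑ u ∈ S, w u := by
  obtain rfl : feas = NestedFeasible D d b := funext fun S => propext (hfeasdef S)
  refine ⟨feas_greedySelect L fun t _ => by simp, fun S hS => ?_⟩
  have hneg : ∀ x ∈ L, w x < 0 := fun x hx => (hmem x).mp hx
  calc ∑ u ∈ greedySelect (NestedFeasible D d b) L ∅, w u
      ≤ ∑ u ∈ S with w u < 0, w u :=
        sum_greedySelect_le nestedFeasible_antitone hasInsertExchange_nestedFeasible hsort hneg
          (nestedFeasible_antitone (filter_subset _ S) hS) (empty_subset _)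
          fun x hx _ => (hmem x).mpr (mem_filter.mp hx).2
    _ ≤ ∑ u ∈ S, w u :=
        sum_le_sum_of_subset_of_nonneg (filter_subset _ S) fun x hxS hx =>
          not_lt.mp fun hlt => hx (mem_filter.mpr ⟨hxS, hlt⟩)

/-- greedy optimality for nested cardinality constraints: sorting the
negatively-weighted items by weight ascending and greedily inserting those that keep
all nested constraints satisfied yields a minimizer of `Σ w_u x_u`. -/
theorem stmt15 {N : Type*} [Fintype N] [DecidableEq N]
    (D : ℕ) (d : N → ℕ) (hdD : ∀ u, d u ≤ D) (w : N → ℝ)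
    (b : ℕ → ℕ) (hb : ∀ i j, i ≤ j → j ≤ D → b j ≤ b i)
    (feas : Finset N → Prop)
    (hfeasdef : ∀ S : Finset N,
      feas S ↔ ∀ dd ≤ D, (S.filter (fun u => dd ≤ d u)).card ≤ b dd)
    (L : List N) (hnd : L.Nodup)
    (hmem : ∀ u, u ∈ L ↔ w u < 0)
    (hsort : L.Pairwise (fun u v => w u ≤ w v)) :
    feas (greedySelect feas L ∅) ∧
    ∀ S : Finset N, feas S →
      ∑ u ∈ greedySelect feas L ∅, w u ≤ ∑ u ∈ S, w u :=
  stmt15_general D d w b feas hfeasdef L hmem hsort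
end
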